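/- For m > 0, y > 0, real s and integer k, the raising operator acts on the M-Whittaker seed by R_k(ℳ_{s,k}(4πmy) e(−mx)) = 4πm (s + k/2) ℳ_{s,k+2}(4πmy) e(−mx). -/

import Mathlib

/-!
With `F = ₁F₁`, one has `ℳ_{s,k}(y) = e^{-y/2} y^{s-k/2} F(s + k/2; 2s; y)`, and Kummer's contiguous
relation `y F'(a; b; y) = a (F(a + 1; b; y) - F(a; b; y))` turns into
`ℳ_{s,k}' = (s + k/2) ℳ_{s,k+2} - (1/2 + k/y) ℳ_{s,k}`. On `g(v) e(-mu)` the raising operator acts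
as `g ↦ 2πm g + g' + (k/v) g`; with `y = 4πmv` the terms in `ℳ_{s,k}` cancel.
-/

noncomputable section

/-- Partial derivative in the direction of the real axis (`∂/∂u`). -/
def du (f : ℂ → ℂ) (z : ℂ) : ℂ := fderiv ℝ f z 1

/-- Partial derivative in the direction of the imaginary axis (`∂/∂v`). -/
def dv (f : ℂ → ℂ) (z : ℂ) : ℂ := fderiv ℝ f z Complex.I

/-- The weight `k` hyperbolic Laplace operator
`Δ_k = -v^2 (∂_u^2 + ∂_v^2) + i k v (∂_u + i ∂_v)`. -/
def hypLaplacian (k : ℝ) (f : ℂ → ℂ) (z : ℂ) : ℂ :=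
  -(z.im : ℂ) ^ 2 * (du (du f) z + dv (dv f) z)
    + Complex.I * (k : ℂ) * (z.im : ℂ) * (du f z + Complex.I * dv f z)

/-- The weight `k` Maass raising operator `R_k = 2i ∂/∂τ + k v⁻¹`,
where `2i ∂/∂τ = i ∂_u + ∂_v`. -/
def raiseOp (k : ℝ) (f : ℂ → ℂ) (z : ℂ) : ℂ :=
  Complex.I * du f z + dv f z + (k : ℂ) / (z.im : ℂ) * f z


/-- The classical M-Whittaker function `M_{ν,μ}(y)`, defined by its power series
`M_{ν,μ}(y) = e^{-y/2} y^{μ+1/2} ∑_{n≥0} ((μ-ν+1/2)_n / ((2μ+1)_n n!)) yⁿ`. -/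
def whittakerM (ν μ : ℝ) (y : ℝ) : ℝ :=
  Real.exp (-y / 2) * y ^ (μ + 1 / 2) *
    ∑' n : ℕ, (ascPochhammer ℝ n).eval (μ - ν + 1 / 2) /
      ((ascPochhammer ℝ n).eval (2 * μ + 1) * (n.factorial : ℝ)) * y ^ n

/-- `ℳ_{s,k}(y) = y^{-k/2} M_{-k/2, s-1/2}(y)`. -/
def mcal (s k : ℝ) (y : ℝ) : ℝ := y ^ (-(k / 2)) * whittakerM (-(k / 2)) (s - 1 / 2) y

open Real Filter

/-- Coefficients of Kummer's confluent hypergeometric series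
`₁F₁(a; b; y) = ∑ (a)_n / ((b)_n n!) yⁿ`. -/
def kummerCoeff (a b : ℝ) (n : ℕ) : ℝ :=
  (ascPochhammer ℝ n).eval a / ((ascPochhammer ℝ n).eval b * n.factorial)

def kummerM (a b y : ℝ) : ℝ := ∑' n, kummerCoeff a b n * y ^ n

lemma kummerCoeff_succ (a b : ℝ) (n : ℕ) :
    kummerCoeff a b (n + 1) = kummerCoeff a b n * ((a + n) / ((b + n) * (n + 1))) := by
  unfold kummerCoeff
  rw [ascPochhammer_succ_eval, ascPochhammer_succ_eval, Nat.factorial_succ]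
  by_cases hb : (ascPochhammer ℝ n).eval b = 0
  · simp [hb]
  by_cases hbn : b + n = 0
  · simp [hbn]
  have : (n.factorial : ℝ) ≠ 0 := mod_cast n.factorial_ne_zero
  push_cast
  field_simp

lemma mul_kummerCoeff_add_one (a b : ℝ) (n : ℕ) :
    a * kummerCoeff (a + 1) b n = (a + n) * kummerCoeff a b n := by
  have h : a * (ascPochhammer ℝ n).eval (a + 1) = (a + n) * (ascPochhammer ℝ n).eval a := by
    rw [mul_comm (a + n), ← ascPochhammer_succ_eval, ascPochhammer_succ_left,
      Polynomial.eval_mul, Polynomial.eval_comp]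
    simp
  simp only [kummerCoeff, ← mul_div_assoc, h]

lemma eventually_kummer_ratio_le (a b y : ℝ) :
    ∀ᶠ n : ℕ in atTop, |a + n| * |y| ≤ 1 / 2 * (|b + n| * (n + 1)) := by
  have hn := tendsto_natCast_atTop_atTop (R := ℝ)
  filter_upwards [hn.eventually_ge_atTop |a|, hn.eventually_ge_atTop (2 * |b|),
    hn.eventually_ge_atTop (8 * |y|)] with n ha hb hy
  have hbn : (n : ℝ) / 2 ≤ |b + n| := by
    linarith [neg_abs_le b, le_abs_self (b + n)]
  have han : |a + n| ≤ 2 * n := by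
    linarith [abs_add_le a n, abs_of_nonneg (Nat.cast_nonneg (α := ℝ) n)]
  calc |a + n| * |y| ≤ 2 * n * (n / 8) := by gcongr; linarith
    _ ≤ 1 / 2 * (n / 2 * (n + 1)) := by nlinarith
    _ ≤ 1 / 2 * (|b + n| * (n + 1)) := by gcongr

lemma summable_norm_kummerCoeff_mul_pow (a b y : ℝ) :
    Summable fun n ↦ ‖kummerCoeff a b n * y ^ n‖ := by
  refine summable_of_ratio_norm_eventually_le (r := 1 / 2) (by norm_num) ?_
  filter_upwards [eventually_kummer_ratio_le a b y] with n hn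
  have hratio : |a + n| * |y| / (|b + n| * (n + 1)) ≤ 1 / 2 :=
    div_le_of_le_mul₀ (by positivity) (by norm_num) hn
  simp only [abs_abs, norm_mul, norm_pow, Real.norm_eq_abs, kummerCoeff_succ, abs_div,
    abs_mul, pow_succ]
  rw [abs_of_pos (by positivity : (0 : ℝ) < n + 1)]
  calc |kummerCoeff a b n| * (|a + n| / (|b + n| * (n + 1))) * (|y| ^ n * |y|)
      = |kummerCoeff a b n| * |y| ^ n * (|a + n| * |y| / (|b + n| * (n + 1))) := by ring
    _ ≤ 1 / 2 * (|kummerCoeff a b n| * |y| ^ n) := by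
      rw [mul_comm (1 / 2)]; gcongr

lemma hasDerivAt_kummerM_tsum (a b y : ℝ) :
    HasDerivAt (kummerM a b) (∑' n, kummerCoeff a b n * (n * y ^ (n - 1))) y := by
  set R := |y| + 1
  have hyR : y ∈ Set.Ioo (-R) R := ⟨by linarith [neg_abs_le y], by linarith [le_abs_self y]⟩
  refine hasDerivAt_tsum_of_isPreconnected (g := fun n t ↦ kummerCoeff a b n * t ^ n)
    (g' := fun n t ↦ kummerCoeff a b n * (n * t ^ (n - 1)))
    (summable_norm_kummerCoeff_mul_pow a b (2 * R))
    isOpen_Ioo isPreconnected_Ioo (fun n t _ ↦ ?_) (fun n t ht ↦ ?_) hyR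
    (summable_norm_kummerCoeff_mul_pow a b y).of_norm hyR
  · simpa using (hasDerivAt_pow n t).const_mul (kummerCoeff a b n)
  · have ht : |t| ≤ R := abs_le.2 ⟨ht.1.le, ht.2.le⟩
    have hR : 1 ≤ R := by simp [R]
    have hn : (n : ℝ) ≤ 2 ^ n := mod_cast Nat.lt_two_pow_self.le
    calc ‖kummerCoeff a b n * (n * t ^ (n - 1))‖
        = |kummerCoeff a b n| * (n * |t| ^ (n - 1)) := by simp
      _ ≤ |kummerCoeff a b n| * (2 ^ n * R ^ n) := by
        gcongr
        exact (pow_le_pow_left₀ (abs_nonneg t) ht _).trans (pow_le_pow_right₀ hR (n.sub_le 1))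
      _ = ‖kummerCoeff a b n * (2 * R) ^ n‖ := by
        simp [mul_pow, abs_of_nonneg (by positivity : (0 : ℝ) ≤ R)]

lemma mul_tsum_kummerCoeff_deriv (a b y : ℝ) :
    y * ∑' n, kummerCoeff a b n * (n * y ^ (n - 1)) = a * (kummerM (a + 1) b y - kummerM a b y) := by
  have hsum (c : ℝ) : Summable fun n ↦ kummerCoeff c b n * y ^ n :=
    (summable_norm_kummerCoeff_mul_pow c b y).of_norm
  rw [kummerM, kummerM, ← (hsum (a + 1)).tsum_sub (hsum a), ← tsum_mul_left, ← tsum_mul_left]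
  congr 1 with n
  rcases n with _ | n
  · simp [kummerCoeff]
  · rw [Nat.add_sub_cancel]
    linear_combination (-y ^ (n + 1)) * mul_kummerCoeff_add_one a b (n + 1)

lemma hasDerivAt_kummerM (a b : ℝ) {y : ℝ} (hy : y ≠ 0) :
    HasDerivAt (kummerM a b) (a / y * (kummerM (a + 1) b y - kummerM a b y)) y := by
  convert hasDerivAt_kummerM_tsum a b y using 1
  rw [← mul_div_cancel_left₀ (∑' n, _) hy, mul_tsum_kummerCoeff_deriv]
  ring

lemma mcal_eq_kummerM (s k : ℝ) {y : ℝ} (hy : 0 < y) :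
    mcal s k y = exp (-y / 2) * y ^ (s - k / 2) * kummerM (s + k / 2) (2 * s) y := by
  rw [mcal, whittakerM, show s - 1 / 2 + 1 / 2 = s by ring,
    show s - 1 / 2 - -(k / 2) + 1 / 2 = s + k / 2 by ring, show 2 * (s - 1 / 2) + 1 = 2 * s by ring,
    show s - k / 2 = -(k / 2) + s by ring, rpow_add hy, kummerM]
  simp only [kummerCoeff]
  ring

lemma hasDerivAt_mcal (s k : ℝ) {y : ℝ} (hy : 0 < y) :
    HasDerivAt (mcal s k) ((s + k / 2) * mcal s (k + 2) y - (1 / 2 + k / y) * mcal s k y) y := by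
  have hE : HasDerivAt (fun t ↦ exp (-t / 2)) (exp (-y / 2) * (-1 / 2)) y := by
    simpa using ((hasDerivAt_id y).neg.div_const 2).exp
  have hP : HasDerivAt (fun t ↦ t ^ (s - k / 2)) ((s - k / 2) * y ^ (s - k / 2 - 1)) y :=
    hasDerivAt_rpow_const (Or.inl hy.ne')
  have hmcal : mcal s k =ᶠ[nhds y]
      fun t ↦ exp (-t / 2) * t ^ (s - k / 2) * kummerM (s + k / 2) (2 * s) t :=
    eventually_of_mem (Ioi_mem_nhds hy) fun t ht ↦ mcal_eq_kummerM s k ht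
  refine ((hE.mul hP).mul (hasDerivAt_kummerM _ _ hy.ne')).congr_of_eventuallyEq hmcal
    |>.congr_deriv ?_
  rw [mcal_eq_kummerM s k hy, mcal_eq_kummerM s (k + 2) hy, rpow_sub_one hy.ne',
    show s + (k + 2) / 2 = s + k / 2 + 1 by ring, show s - (k + 2) / 2 = s - k / 2 - 1 by ring,
    rpow_sub_one hy.ne']
  simp only [Pi.mul_apply]
  field_simp
  ring

open Complex in
lemma raiseOp_ofReal_comp_im_mul_cexp (k : ℝ) {g : ℝ → ℝ} {g' : ℝ} (c : ℂ) {τ : ℂ}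
    (hg : HasDerivAt g g' τ.im) :
    raiseOp k (fun w ↦ (g w.im : ℂ) * cexp (c * w.re)) τ
      = (I * c * g τ.im + g' + k / τ.im * g τ.im) * cexp (c * τ.re) := by
  have hA := ofRealCLM.hasFDerivAt.comp τ (hg.comp_hasFDerivAt τ imCLM.hasFDerivAt)
  have hB := ((c • (ofRealCLM.comp reCLM)).hasFDerivAt (x := τ)).cexp
  have hf : HasFDerivAt (fun w ↦ (g w.im : ℂ) * cexp (c * w.re)) _ τ := hA.mul hB
  simp only [raiseOp, du, dv, hf.fderiv]
  simp
  ring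

open Real in
/-- For `m > 0`, real `s` and integer `k`, the raising operator acts on the seed
`ℳ_{s,k}(4πmy) e(-mx)` by
`R_k(ℳ_{s,k}(4πmy) e(-mx)) = 4πm (s + k/2) ℳ_{s,k+2}(4πmy) e(-mx)`. -/
theorem raise_whittakerM_seed (m : ℝ) (hm : 0 < m) (s : ℝ) (k : ℤ)
    (τ : ℂ) (hτ : 0 < τ.im) :
    raiseOp (k : ℝ) (fun w : ℂ =>
        ((mcal s (k : ℝ) (4 * π * m * w.im) : ℝ) : ℂ) *
          Complex.exp (-(2 * π * Complex.I * (m : ℂ) * (w.re : ℂ)))) τ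
      = 4 * (π : ℂ) * (m : ℂ) * ((s : ℂ) + (k : ℂ) / 2) *
          (((mcal s ((k : ℝ) + 2) (4 * π * m * τ.im) : ℝ) : ℂ) *
            Complex.exp (-(2 * π * Complex.I * (m : ℂ) * (τ.re : ℂ)))) := by
  have hy : 0 < 4 * π * m * τ.im := by positivity
  have hg := (hasDerivAt_mcal s k hy).comp τ.im ((hasDerivAt_id τ.im).const_mul (4 * π * m))
  convert raiseOp_ofReal_comp_im_mul_cexp k (-(2 * π * Complex.I * m)) hg using 1
  · simp only [neg_mul, Function.comp_def]
  · have hm' : (m : ℂ) ≠ 0 := mod_cast hm.ne'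
    have hτ' : (τ.im : ℂ) ≠ 0 := mod_cast hτ.ne'
    simp only [Function.comp_apply]
    push_cast
    field_simp
    linear_combination (4 * π * m * τ.im * (mcal s k (4 * π * m * τ.im) : ℂ)) * Complex.I_sq
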